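/- arXiv:2204.08275 — 2 statements merged into one kernel-verified Lean document; each statement's English description precedes it below -/
import Mathlib

section
/- For every real x > 1/4, ∑_{k=0}^∞ (2(4x−1)k − 2x − 1)/(x^{2k}·C(4k,2k)) = (8x²/(4x+1)²)·( 3·√(4x+1)·arctanh(1/√(4x+1))/(4x+1) − 4x − 4 ). -/
/-!
By the Beta integral, `1 / C(4k, 2k) = (4k + 1) ∫₀¹ (t(1-t))^(2k) dt`. Since `w = t(1-t) ≤ 1/4 < x`,
dominated convergence moves the sum inside the integral, where it is a quadratic polynomial in `k`
times `(w / x)^(2k)`, summing to a rational function of `w`. As `(1 - 2t)² = 1 - 4w`, the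
`t`-derivative of `(1 - 2t) R(w)` is again a function of `w`; for a suitable rational
`R = kernelPrimitive x` it accounts for everything except `6x² / ((4x+1)² (x + w))`, and its
boundary terms give `-2 R(0)`. The remaining term integrates to a logarithm because
`x + w = (v² - (1 - 2t)²) / 4` with `v = √(4x + 1)`; this is the `artanh (1 / v)` of the closed form.
-/

open Real Set intervalIntegral
open scoped Nat

theorem integral_pow_mul_one_sub_pow (m n : ℕ) :
    ∫ t in (0 : ℝ)..1, t ^ m * (1 - t) ^ n = m ! * n ! / (m + n + 1)! := by
  induction n generalizing m with
  | zero =>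
    rw [integral_congr (g := fun t : ℝ => t ^ m) fun t _ => by simp, integral_pow]
    field_simp
    simp [Nat.factorial_succ]
  | succ n ih =>
    have hu : ∀ t ∈ uIcc (0 : ℝ) 1,
        HasDerivAt (fun t : ℝ => (1 - t) ^ (n + 1)) (-((n + 1) * (1 - t) ^ n)) t := fun t _ => by
      refine (((hasDerivAt_id' t).const_sub 1).fun_pow (n + 1)).congr_deriv ?_
      push_cast
      ring
    have hv : ∀ t ∈ uIcc (0 : ℝ) 1,
        HasDerivAt (fun t : ℝ => t ^ (m + 1) / (m + 1)) (t ^ m) t := fun t _ => by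
      refine ((hasDerivAt_pow (m + 1) t).div_const ((m : ℝ) + 1)).congr_deriv ?_
      push_cast
      field_simp
    have parts := integral_mul_deriv_eq_deriv_mul hu hv
      (Continuous.intervalIntegrable (by fun_prop) _ _)
      (Continuous.intervalIntegrable (by fun_prop) _ _)
    simp only [sub_self, sub_zero, one_pow, ne_eq, add_eq_zero, one_ne_zero, and_false,
      not_false_eq_true, zero_pow, zero_mul, zero_div, mul_zero, zero_sub] at parts
    calc ∫ t in (0 : ℝ)..1, t ^ m * (1 - t) ^ (n + 1)
        = (n + 1) / (m + 1) * ∫ t in (0 : ℝ)..1, t ^ (m + 1) * (1 - t) ^ n := by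
          rw [← integral_const_mul, integral_congr (fun t _ => mul_comm _ _), parts,
            ← integral_neg]
          refine integral_congr fun t _ => ?_
          ring
      _ = m ! * (n + 1)! / (m + (n + 1) + 1)! := by
          rw [ih, show m + 1 + n + 1 = m + (n + 1) + 1 by ring]
          simp only [Nat.factorial_succ, Nat.cast_mul]
          field_simp
          push_cast
          ring

theorem inv_centralBinom_eq_integral (n : ℕ) :
    (n.centralBinom : ℝ)⁻¹ = (2 * n + 1) * ∫ t in (0 : ℝ)..1, (t * (1 - t)) ^ n := by
  simp_rw [mul_pow, integral_pow_mul_one_sub_pow, Nat.centralBinom_eq_two_mul_choose,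
    Nat.cast_choose ℝ (by omega : n ≤ 2 * n), show 2 * n - n = n by omega,
    show n + n + 1 = 2 * n + 1 by omega, Nat.factorial_succ]
  push_cast
  field_simp

theorem hasSum_quadratic_mul_geometric {𝕜 : Type*} [NormedField 𝕜] {q : 𝕜}
    (hq : ‖q‖ < 1) (a b c : 𝕜) :
    HasSum (fun n : ℕ => (a * n ^ 2 + b * n + c) * q ^ n)
      ((a * q * (1 + q) + b * q * (1 - q) + c * (1 - q) ^ 2) / (1 - q) ^ 3) := by
  have h1q : 1 - q ≠ 0 := sub_ne_zero.2 fun h => by simp [← h] at hq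
  -- `n ^ 2 = 2 * (n + 2).choose 2 - 3 * n - 2`
  have hsum := (((hasSum_choose_mul_geometric_of_norm_lt_one 2 hq).mul_left (2 * a)).add
    ((hasSum_coe_mul_geometric_of_norm_lt_one hq).mul_left (b - 3 * a))).add
    ((hasSum_geometric_of_norm_lt_one hq).mul_left (c - 2 * a))
  convert_to HasSum _ (2 * a * (1 / (1 - q) ^ (2 + 1)) + (b - 3 * a) * (q / (1 - q) ^ 2) +
    (c - 2 * a) * (1 - q)⁻¹) using 1
  · field_simp
    ring
  refine hsum.congr_fun fun n => ?_
  have hc : ((n + 2).choose 2 : 𝕜) * 2 = (n + 2) * (n + 1) := by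
    have hc : (n + 2).choose 2 * 2 = (n + 2) * (n + 1) := by
      rw [← Nat.add_one_mul_choose_eq (n + 1) 1, Nat.choose_one_right]
    simpa using congrArg (Nat.cast : ℕ → 𝕜) hc
  linear_combination (-a * q ^ n) * hc

theorem div_mul_choose_eq_integral (c x : ℝ) (k : ℕ) :
    c / (x ^ (2 * k) * (Nat.choose (4 * k) (2 * k) : ℝ)) =
      ∫ t in (0 : ℝ)..1, c * (4 * k + 1) * ((t * (1 - t)) ^ 2 / x ^ 2) ^ k := by
  have h := inv_centralBinom_eq_integral (2 * k)
  rw [Nat.centralBinom_eq_two_mul_choose, show 2 * (2 * k) = 4 * k by ring] at h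
  rw [integral_congr (g := fun t => c * (4 * k + 1) / x ^ (2 * k) * (t * (1 - t)) ^ (2 * k))
    fun t _ => by rw [div_pow, ← pow_mul, mul_comm 2 k]; ring, integral_const_mul,
    div_eq_mul_inv, mul_inv, h]
  push_cast
  ring

noncomputable def seriesKernel (x w : ℝ) : ℝ :=
  x ^ 2 * (-(2 * x + 1) * x ^ 4 + (36 * x - 12) * x ^ 2 * w ^ 2 + (30 * x - 3) * w ^ 4) /
    (x ^ 2 - w ^ 2) ^ 3

theorem hasSum_seriesKernel {x w : ℝ} (hwx : |w| < x) :
    HasSum (fun k : ℕ => (2 * (4 * x - 1) * k - 2 * x - 1) * (4 * k + 1) * (w ^ 2 / x ^ 2) ^ k)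
      (seriesKernel x w) := by
  have hx : 0 < x := (abs_nonneg w).trans_lt hwx
  have hw2 : w ^ 2 < x ^ 2 := sq_lt_sq' (abs_lt.1 hwx).1 (abs_lt.1 hwx).2
  have hq : ‖w ^ 2 / x ^ 2‖ < 1 := by
    rw [Real.norm_of_nonneg (by positivity), div_lt_one (by positivity)]
    exact hw2
  have h := hasSum_quadratic_mul_geometric hq (8 * (4 * x - 1)) (2 * (4 * x - 1) - 4 * (2 * x + 1))
    (-(2 * x + 1))
  have hD : x ^ 2 - w ^ 2 ≠ 0 := (sub_pos.2 hw2).ne'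
  convert! h.congr_fun fun k => ?_ using 1
  · unfold seriesKernel
    field_simp
    ring
  · ring

theorem mul_one_sub_mem_Icc {t : ℝ} (ht : t ∈ Icc (0 : ℝ) 1) :
    t * (1 - t) ∈ Icc (0 : ℝ) (1 / 4) :=
  ⟨mul_nonneg ht.1 (sub_nonneg.2 ht.2), by nlinarith [sq_nonneg (t - 1 / 2)]⟩

theorem hasSum_integral_seriesKernel {x : ℝ} (hx : 1 / 4 < x) :
    HasSum (fun k : ℕ => ∫ t in (0 : ℝ)..1,
        (2 * (4 * x - 1) * k - 2 * x - 1) * (4 * k + 1) * ((t * (1 - t)) ^ 2 / x ^ 2) ^ k)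
      (∫ t in (0 : ℝ)..1, seriesKernel x (t * (1 - t))) := by
  have hx0 : 0 < x := by linarith
  have hq : ‖(1 / 4) ^ 2 / x ^ 2‖ < 1 := by
    rw [Real.norm_of_nonneg (by positivity), div_lt_one (by positivity)]
    nlinarith
  have hsummable := (hasSum_quadratic_mul_geometric hq (8 * (4 * x - 1))
    (2 * (4 * x - 1) + 4 * (2 * x + 1)) (2 * x + 1)).summable
  have hw : ∀ t ∈ uIoc (0 : ℝ) 1, t * (1 - t) ∈ Icc (0 : ℝ) (1 / 4) := fun t ht =>
    mul_one_sub_mem_Icc (Ioc_subset_Icc_self (by rwa [uIoc_of_le zero_le_one] at ht))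
  refine intervalIntegral.hasSum_integral_of_dominated_convergence
    (fun k _ => (2 * (4 * x - 1) * k + 2 * x + 1) * (4 * k + 1) * ((1 / 4) ^ 2 / x ^ 2) ^ k)
    (fun k => Continuous.aestronglyMeasurable (by fun_prop))
    (fun k => Filter.Eventually.of_forall fun t ht => ?_)
    (Filter.Eventually.of_forall fun t _ => hsummable.congr fun k => by ring)
    intervalIntegrable_const
    (Filter.Eventually.of_forall fun t ht => hasSum_seriesKernel ?_)
  · obtain ⟨hw0, hw4⟩ := hw t ht
    have hk : 0 ≤ 2 * (4 * x - 1) * k := mul_nonneg (by linarith) k.cast_nonneg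
    have hcoef : ‖2 * (4 * x - 1) * k - 2 * x - 1‖ ≤ 2 * (4 * x - 1) * k + 2 * x + 1 := by
      rw [Real.norm_eq_abs, abs_le]
      constructor <;> linarith
    rw [norm_mul, norm_mul, norm_pow, Real.norm_of_nonneg (by positivity : (0 : ℝ) ≤ 4 * k + 1),
      Real.norm_of_nonneg (by positivity : (0 : ℝ) ≤ (t * (1 - t)) ^ 2 / x ^ 2)]
    gcongr
  · obtain ⟨hw0, hw4⟩ := hw t ht
    rw [abs_of_nonneg hw0]
    linarith

theorem sq_sub_sq_mul_one_sub_pos {x t : ℝ} (hx : 1 / 4 < x) (ht : t ∈ Icc (0 : ℝ) 1) :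
    0 < x ^ 2 - (t * (1 - t)) ^ 2 := by
  obtain ⟨hw0, hw4⟩ := mul_one_sub_mem_Icc ht
  nlinarith

noncomputable def kernelPrimitive (x w : ℝ) : ℝ :=
  x ^ 2 * (16 * x ^ 4 * (1 + x) - x ^ 2 * (1 + 16 * x) * w - 16 * x ^ 2 * (2 + 5 * x) * w ^ 2 -
    3 * w ^ 3) / ((4 * x + 1) ^ 2 * (x ^ 2 - w ^ 2) ^ 2)

theorem hasDerivAt_one_sub_two_mul_kernelPrimitive {x t : ℝ} (hx : 1 / 4 < x)
    (ht : t ∈ Icc (0 : ℝ) 1) :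
    HasDerivAt (fun t => (1 - 2 * t) * kernelPrimitive x (t * (1 - t)))
      (seriesKernel x (t * (1 - t)) - 6 * x ^ 2 / ((4 * x + 1) ^ 2 * (x + t * (1 - t)))) t := by
  have hD := sq_sub_sq_mul_one_sub_pos hx ht
  have hxw : 0 < x + t * (1 - t) := by linarith [(mul_one_sub_mem_Icc ht).1]
  have hw : HasDerivAt (fun t : ℝ => t * (1 - t)) (1 - 2 * t) t := by
    refine ((hasDerivAt_id' t).mul ((hasDerivAt_id' t).const_sub 1)).congr_deriv ?_
    ring
  have hnum := ((((hw.const_mul (x ^ 2 * (1 + 16 * x))).const_sub (16 * x ^ 4 * (1 + x))).fun_sub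
    ((hw.fun_pow 2).const_mul (16 * x ^ 2 * (2 + 5 * x)))).fun_sub
    ((hw.fun_pow 3).const_mul 3)).const_mul (x ^ 2)
  have hden := (((hw.fun_pow 2).const_sub (x ^ 2)).fun_pow 2).const_mul ((4 * x + 1) ^ 2)
  have hlin : HasDerivAt (fun t : ℝ => 1 - 2 * t) (-2) t := by
    simpa using ((hasDerivAt_id' t).const_mul 2).const_sub 1
  refine (hlin.fun_mul (hnum.fun_div hden (by positivity))).congr_deriv ?_
  have hD' : x ^ 2 - t ^ 2 * (1 - t) ^ 2 ≠ 0 := by rw [← mul_pow]; exact hD.ne'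
  have hxw' := hxw.ne'
  have h4x : 4 * x + 1 ≠ 0 := by linarith
  unfold seriesKernel
  simp only [Nat.cast_ofNat, Nat.add_one_sub_one, pow_one]
  field_simp
  ring

theorem hasDerivAt_log_sub_log {x v t : ℝ} (hv : v ^ 2 = 4 * x + 1) (hv1 : 1 < v)
    (ht : t ∈ Icc (0 : ℝ) 1) :
    HasDerivAt (fun t => log (v + 2 * t - 1) - log (v + 1 - 2 * t)) (v / (x + t * (1 - t))) t := by
  obtain ⟨ht0, ht1⟩ := ht
  have ha : 0 < v + 2 * t - 1 := by linarith
  have hb : 0 < v + 1 - 2 * t := by linarith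
  have h1 := ((((hasDerivAt_id' t).const_mul 2).const_add v).sub_const 1).log ha.ne'
  have h2 := (((hasDerivAt_id' t).const_mul 2).const_sub (v + 1)).log hb.ne'
  refine (h1.sub h2).congr_deriv ?_
  have hxw : x + t * (1 - t) = (v + 2 * t - 1) * (v + 1 - 2 * t) / 4 := by
    linear_combination (-1 / 4) * hv
  rw [hxw]
  field_simp
  ring

theorem integral_seriesKernel {x : ℝ} (hx : 1 / 4 < x) :
    ∫ t in (0 : ℝ)..1, seriesKernel x (t * (1 - t)) =
      (8 * x ^ 2 / (4 * x + 1) ^ 2) *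
        (3 * √(4 * x + 1) * ((1 / 2) * log ((1 + 1 / √(4 * x + 1)) / (1 - 1 / √(4 * x + 1)))) /
          (4 * x + 1) - 4 * x - 4) := by
  set v := √(4 * x + 1) with hv_def
  have hv : v ^ 2 = 4 * x + 1 := Real.sq_sqrt (by linarith)
  have hv1 : 1 < v := by
    rw [hv_def, Real.lt_sqrt zero_le_one]
    linarith
  have hderiv : ∀ t ∈ uIcc (0 : ℝ) 1,
      HasDerivAt (fun t => (1 - 2 * t) * kernelPrimitive x (t * (1 - t)) +
        6 * x ^ 2 / ((4 * x + 1) ^ 2 * v) * (log (v + 2 * t - 1) - log (v + 1 - 2 * t)))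
        (seriesKernel x (t * (1 - t))) t := by
    intro t ht
    rw [uIcc_of_le zero_le_one] at ht
    have hxw : 0 < x + t * (1 - t) := by linarith [(mul_one_sub_mem_Icc ht).1]
    refine ((hasDerivAt_one_sub_two_mul_kernelPrimitive hx ht).add
      ((hasDerivAt_log_sub_log hv hv1 ht).const_mul _)).congr_deriv ?_
    field_simp
    ring
  have hint :
      IntervalIntegrable (fun t => seriesKernel x (t * (1 - t))) MeasureTheory.volume 0 1 := by
    refine ContinuousOn.intervalIntegrable ?_
    rw [uIcc_of_le zero_le_one]
    exact ContinuousOn.div (by fun_prop) (by fun_prop) fun t ht =>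
      pow_ne_zero 3 (sq_sub_sq_mul_one_sub_pos hx ht).ne'
  have hR0 : kernelPrimitive x 0 = 16 * x ^ 2 * (1 + x) / (4 * x + 1) ^ 2 := by
    unfold kernelPrimitive
    field_simp
    ring
  have harg : (1 + 1 / v) / (1 - 1 / v) = (v + 1) / (v - 1) := by
    field_simp
  rw [integral_eq_sub_of_hasDerivAt hderiv hint, harg, log_div (by linarith) (by linarith)]
  simp only [sub_self, mul_zero, sub_zero, mul_one, add_zero, hR0]
  rw [show v + 2 - 1 = v + 1 by ring, show v + 1 - 2 = v - 1 by ring, ← hv]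
  field_simp
  ring

theorem stmt_12 (x : ℝ) (hx : 1 / 4 < x) :
    ∑' k : ℕ, (2 * (4 * x - 1) * k - 2 * x - 1) /
        (x ^ (2 * k) * (Nat.choose (4 * k) (2 * k) : ℝ)) =
      (8 * x ^ 2 / (4 * x + 1) ^ 2) *
        (3 * Real.sqrt (4 * x + 1) *
            ((1 / 2) * Real.log ((1 + 1 / Real.sqrt (4 * x + 1)) / (1 - 1 / Real.sqrt (4 * x + 1)))) /
            (4 * x + 1) - 4 * x - 4) := by
  have hsum := (hasSum_integral_seriesKernel hx).congr_fun fun k =>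
    div_mul_choose_eq_integral (2 * (4 * x - 1) * k - 2 * x - 1) x k
  rw [hsum.tsum_eq, integral_seriesKernel hx]
end

section
/- ∑_{k=0}^∞ k·4^k/C(4k,2k) = (3π + 8)/12. -/
/-!
Euler's Beta integral gives `1 / ((4k + 1) C(4k, 2k)) = ∫₀¹ t^(2k) (1 - t)^(2k) dt`, so with
`z = 4t²(1 - t)² ∈ [0, 1/4]` the series equals `∫₀¹ ∑ k (4k + 1) z^k dt`, the interchange being
justified by domination by `k (4k + 1) 4^(-k)`. The inner series sums to `z (5 + 3z) / (1 - z)³`.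
In the variable `u = 2t - 1` one has `1 - z = (1 + u²)(3 - u²)/4`, and a partial fraction
decomposition gives an explicit primitive; its arctangent term contributes `π/4`.
-/

open MeasureTheory intervalIntegral

theorem integral_pow_mul_one_sub_pow_recurrence (a b : ℕ) :
    (a + 1 : ℝ) * ∫ x in (0 : ℝ)..1, x ^ a * (1 - x) ^ (b + 1)
      = (b + 1) * ∫ x in (0 : ℝ)..1, x ^ (a + 1) * (1 - x) ^ b := by
  have hu : ∀ x ∈ Set.uIcc (0 : ℝ) 1,
      HasDerivAt (fun x : ℝ => x ^ (a + 1)) ((a + 1 : ℝ) * x ^ a) x := fun x _ => by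
    simpa using hasDerivAt_pow (a + 1) x
  have hv : ∀ x ∈ Set.uIcc (0 : ℝ) 1,
      HasDerivAt (fun x : ℝ => (1 - x) ^ (b + 1)) (-((b + 1 : ℝ) * (1 - x) ^ b)) x :=
    fun x _ => by simpa using ((hasDerivAt_id x).const_sub 1).fun_pow (b + 1)
  have hparts := integral_mul_deriv_eq_deriv_mul hu hv
    (by apply Continuous.intervalIntegrable; fun_prop)
    (by apply Continuous.intervalIntegrable; fun_prop)
  simp only [mul_neg, intervalIntegral.integral_neg, zero_pow (Nat.succ_ne_zero _), one_pow,
    sub_self, zero_mul, mul_zero, sub_zero, zero_sub, neg_inj] at hparts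
  simp only [mul_left_comm _ ((_ : ℝ) + 1), mul_assoc, intervalIntegral.integral_const_mul]
    at hparts
  linarith

theorem integral_pow_mul_one_sub_pow_s14 (a b : ℕ) :
    ∫ x in (0 : ℝ)..1, x ^ a * (1 - x) ^ b = 1 / ((a + b + 1) * (a + b).choose a) := by
  induction b generalizing a with
  | zero => simp [integral_pow]
  | succ b ih =>
    have hstep := integral_pow_mul_one_sub_pow_recurrence a b
    have hchoose :
        ((a + b + 1).choose (a + 1) * (a + 1) : ℝ) = (a + b + 1).choose a * (b + 1) := by
      have := Nat.choose_succ_right_eq (a + b + 1) a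
      rw [show a + b + 1 - a = b + 1 by omega] at this
      exact_mod_cast this
    rw [ih (a + 1), show a + 1 + b = a + b + 1 by omega] at hstep
    rw [show a + (b + 1) = a + b + 1 by omega]
    set I := ∫ x in (0 : ℝ)..1, x ^ a * (1 - x) ^ (b + 1)
    have hC : ((a + b + 1).choose (a + 1) : ℝ) ≠ 0 :=
      Nat.cast_ne_zero.2 (Nat.choose_pos (by omega)).ne'
    have hC' : ((a + b + 1).choose a : ℝ) ≠ 0 :=
      Nat.cast_ne_zero.2 (Nat.choose_pos (by omega)).ne'
    field_simp at hstep
    push_cast at hstep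
    rw [eq_div_iff (by positivity), ← mul_right_inj' (by positivity : (b + 1 : ℝ) ≠ 0)]
    push_cast
    linear_combination hstep - I * (a + b + 2) * hchoose

theorem hasSum_mul_four_mul_add_one_mul_geometric {𝕜 : Type*} [NormedField 𝕜]
    [HasSummableGeomSeries 𝕜] {z : 𝕜} (hz : ‖z‖ < 1) :
    HasSum (fun k : ℕ => (k : 𝕜) * (4 * k + 1) * z ^ k) (z * (5 + 3 * z) / (1 - z) ^ 3) := by
  have h1z : 1 - z ≠ 0 := fun h => by simp [← sub_eq_zero.1 h] at hz
  -- k (4k + 1) = 8 C(k+2, 2) - 11 C(k+1, 1) + 3 C(k, 0)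
  have H := (((hasSum_choose_mul_geometric_of_norm_lt_one 2 hz).mul_left 8).sub
    ((hasSum_choose_mul_geometric_of_norm_lt_one 1 hz).mul_left 11)).add
    ((hasSum_choose_mul_geometric_of_norm_lt_one 0 hz).mul_left 3)
  rw [show z * (5 + 3 * z) / (1 - z) ^ 3
      = 8 * (1 / (1 - z) ^ (2 + 1)) - 11 * (1 / (1 - z) ^ (1 + 1)) + 3 * (1 / (1 - z) ^ (0 + 1)) by
    field_simp; ring]
  refine H.congr_fun fun k => ?_
  have hC2 : ((k + 2).choose 2 : 𝕜) * 2 = (k + 2) * (k + 1) := by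
    norm_cast
    induction k with
    | zero => rfl
    | succ k ih => rw [Nat.choose_succ_succ', Nat.choose_one_right]; grind
  simp only [Nat.choose_one_right, Nat.choose_zero_right]
  push_cast
  linear_combination (-4 * z ^ k) * hC2

theorem four_mul_sq_mul_one_sub_sq_mem_Icc {t : ℝ} (ht : t ∈ Set.Icc (0 : ℝ) 1) :
    4 * t ^ 2 * (1 - t) ^ 2 ∈ Set.Icc (0 : ℝ) (1 / 4) := by
  have h : 2 * t * (1 - t) ∈ Set.Icc (0 : ℝ) (1 / 2) :=
    ⟨by nlinarith [ht.1, ht.2], by nlinarith [sq_nonneg (2 * t - 1)]⟩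
  constructor <;> nlinarith [h.1, h.2]

theorem mul_four_pow_div_choose_eq_integral (k : ℕ) :
    (k : ℝ) * 4 ^ k / (4 * k).choose (2 * k)
      = ∫ t in (0 : ℝ)..1, (k : ℝ) * (4 * k + 1) * (4 * t ^ 2 * (1 - t) ^ 2) ^ k := by
  have hpow : ∀ t : ℝ,
      (4 * t ^ 2 * (1 - t) ^ 2) ^ k = 4 ^ k * (t ^ (2 * k) * (1 - t) ^ (2 * k)) :=
    fun t => by rw [pow_mul, pow_mul, ← mul_pow, ← mul_pow]; ring
  simp only [hpow, ← mul_assoc _ (4 ^ k : ℝ)]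
  rw [intervalIntegral.integral_const_mul, integral_pow_mul_one_sub_pow_s14,
    show 2 * k + 2 * k = 4 * k by ring]
  have hC : ((4 * k).choose (2 * k) : ℝ) ≠ 0 :=
    Nat.cast_ne_zero.2 (Nat.choose_pos (by omega)).ne'
  push_cast
  field_simp
  ring

theorem hasSum_mul_four_pow_div_choose :
    HasSum (fun k : ℕ => (k : ℝ) * 4 ^ k / (4 * k).choose (2 * k))
      (∫ t in (0 : ℝ)..1,
        4 * t ^ 2 * (1 - t) ^ 2 * (5 + 3 * (4 * t ^ 2 * (1 - t) ^ 2))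
          / (1 - 4 * t ^ 2 * (1 - t) ^ 2) ^ 3) := by
  simp only [mul_four_pow_div_choose_eq_integral]
  have hz : ∀ t ∈ Set.uIoc (0 : ℝ) 1,
      4 * t ^ 2 * (1 - t) ^ 2 ∈ Set.Icc (0 : ℝ) (1 / 4) := by
    intro t ht
    rw [Set.uIoc_of_le zero_le_one] at ht
    exact four_mul_sq_mul_one_sub_sq_mem_Icc (Set.Ioc_subset_Icc_self ht)
  refine hasSum_integral_of_dominated_convergence
    (fun k _ => (k : ℝ) * (4 * k + 1) * (1 / 4) ^ k)
    (fun k => (by fun_prop : Continuous _).aestronglyMeasurable)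
    (fun k => Filter.Eventually.of_forall fun t ht => ?_)
    (Filter.Eventually.of_forall fun _ _ =>
      (hasSum_mul_four_mul_add_one_mul_geometric (z := (1 / 4 : ℝ)) (by norm_num)).summable)
    intervalIntegrable_const
    (Filter.Eventually.of_forall fun t ht =>
      hasSum_mul_four_mul_add_one_mul_geometric ?_)
  · obtain ⟨h0, h1⟩ := hz t ht
    rw [Real.norm_of_nonneg (by positivity)]
    gcongr
  · obtain ⟨h0, h1⟩ := hz t ht
    rw [Real.norm_of_nonneg h0]
    linarith

noncomputable def seriesPrimitive (u : ℝ) : ℝ :=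
  Real.arctan u / 2 + u / (4 * (1 + u ^ 2)) + u / (1 + u ^ 2) ^ 2
    - u / (4 * (3 - u ^ 2)) + u / (3 * (3 - u ^ 2) ^ 2)

theorem hasDerivAt_seriesPrimitive {u : ℝ} (hu : u ^ 2 ≠ 3) :
    HasDerivAt seriesPrimitive
      (2 * (1 - u ^ 2) ^ 2 * (20 + 3 * (1 - u ^ 2) ^ 2)
        / ((1 + u ^ 2) ^ 3 * (3 - u ^ 2) ^ 3)) u := by
  have hQ : 3 - u ^ 2 ≠ 0 := sub_ne_zero.2 hu.symm
  have hsq : HasDerivAt (fun x : ℝ => x ^ 2) (2 * u) u := by simpa using hasDerivAt_pow 2 u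
  have hP' := hsq.const_add 1
  have hQ' := hsq.const_sub 3
  have H := (((((Real.hasDerivAt_arctan u).div_const 2).add
    ((hasDerivAt_id' (x := u)).fun_div (hP'.const_mul 4) (by positivity))).add
    ((hasDerivAt_id' (x := u)).fun_div (hP'.fun_pow 2) (by positivity))).sub
    ((hasDerivAt_id' (x := u)).fun_div (hQ'.const_mul 4) (by simpa using hQ))).add
    ((hasDerivAt_id' (x := u)).fun_div ((hQ'.fun_pow 2).const_mul 3) (by simpa using hQ))
  refine H.congr_deriv ?_
  field_simp
  ring

theorem integral_series_sum_eq :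
    ∫ t in (0 : ℝ)..1,
        4 * t ^ 2 * (1 - t) ^ 2 * (5 + 3 * (4 * t ^ 2 * (1 - t) ^ 2))
          / (1 - 4 * t ^ 2 * (1 - t) ^ 2) ^ 3
      = (3 * Real.pi + 8) / 12 := by
  have hz : ∀ t ∈ Set.uIcc (0 : ℝ) 1, 1 - 4 * t ^ 2 * (1 - t) ^ 2 ≠ 0 := by
    intro t ht
    rw [Set.uIcc_of_le zero_le_one] at ht
    have := (four_mul_sq_mul_one_sub_sq_mem_Icc ht).2
    linarith
  have hderiv : ∀ t ∈ Set.uIcc (0 : ℝ) 1, HasDerivAt (fun t => seriesPrimitive (2 * t - 1))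
      (4 * t ^ 2 * (1 - t) ^ 2 * (5 + 3 * (4 * t ^ 2 * (1 - t) ^ 2))
          / (1 - 4 * t ^ 2 * (1 - t) ^ 2) ^ 3) t := by
    intro t ht
    rw [Set.uIcc_of_le zero_le_one] at ht
    have hu : (2 * t - 1) ^ 2 < 3 := by nlinarith [ht.1, ht.2]
    have hP : 1 + (2 * t - 1) ^ 2 ≠ 0 := by positivity
    have hQ : 3 - (2 * t - 1) ^ 2 ≠ 0 := by linarith
    refine ((hasDerivAt_seriesPrimitive hu.ne).comp t
      (((hasDerivAt_id t).const_mul 2).sub_const 1)).congr_deriv ?_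
    rw [show 1 - 4 * t ^ 2 * (1 - t) ^ 2 = (1 + (2 * t - 1) ^ 2) * (3 - (2 * t - 1) ^ 2) / 4 by
      ring]
    field_simp
    ring
  have hcont : ContinuousOn (fun t : ℝ =>
      4 * t ^ 2 * (1 - t) ^ 2 * (5 + 3 * (4 * t ^ 2 * (1 - t) ^ 2))
        / (1 - 4 * t ^ 2 * (1 - t) ^ 2) ^ 3) (Set.uIcc 0 1) :=
    .div (by fun_prop) (by fun_prop) fun t ht => pow_ne_zero 3 (hz t ht)
  rw [integral_eq_sub_of_hasDerivAt hderiv hcont.intervalIntegrable]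
  norm_num [seriesPrimitive]
  ring

theorem stmt_14 :
    ∑' k : ℕ, (k : ℝ) * 4 ^ k / (Nat.choose (4 * k) (2 * k) : ℝ) = (3 * Real.pi + 8) / 12 :=
  hasSum_mul_four_pow_div_choose.tsum_eq.trans integral_series_sum_eq
end
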